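/- Let n ≥ 1 and let α ∈ ℂⁿ satisfy αᵀα = 0. Let β, β' ∈ ℂⁿ with βᵀα = 0 and β'ᵀα = 0, and κ, κ' ∈ ℂ. Let L and L' be n×n matrices over ℂ((z)) of order ≥ −1 such that every coefficient matrix is skew-symmetric (L_kᵀ = −L_k and L'_kᵀ = −L'_k for all k), L_{−1} = α·βᵀ − β·αᵀ, L'_{−1} = α·β'ᵀ − β'·αᵀ, L_0·α = κ·α and L'_0·α = κ'·α. Then the commutator [L,L'] = L·L' − L'·L has order ≥ −1, all its coefficient matrices are skew-symmetric, and there exist β'' ∈ ℂⁿ and κ'' ∈ ℂ such that [L,L']_{−1} = α·β''ᵀ − β''·αᵀ with β''ᵀα = 0, and [L,L']_0·α = κ''·α. (This is the so(n) case of the theorem that the space of Lax operators is closed under the pointwise commutator, localized at a Tyurin point γ.) -/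

import Mathlib

open Matrix

/-- The matrix of `z^k`-coefficients of a matrix of formal Laurent series. -/
noncomputable def coeffM {n : ℕ} (A : Matrix (Fin n) (Fin n) (LaurentSeries ℂ)) (k : ℤ) :
    Matrix (Fin n) (Fin n) ℂ :=
  fun i j => (A i j).coeff k

/-- `A` has order `≥ m`: all coefficients below `m` vanish. -/
def ordGE {n : ℕ} (A : Matrix (Fin n) (Fin n) (LaurentSeries ℂ)) (m : ℤ) : Prop :=
  ∀ k : ℤ, k < m → coeffM A k = 0

/-!
Write `α ∧ b = α bᵀ - b αᵀ`. Since `αᵀα = 0` and `β, β' ⊥ α`, the product `(α ∧ β)(α ∧ β')` is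
`-(βᵀβ') ααᵀ`, symmetric in `β, β'`, so the `z⁻²` coefficient of the commutator vanishes.
For a skew `B` with `Bα = κα` one has `[B, α ∧ b] = α ∧ (Bb + κb)` and `(Bb + κb)ᵀα = 0`, which
gives the residue. Finally `α ∧ b` kills `α` when `b ⊥ α`, and sends `Mα` into `ℂα` for every skew
`M` because `αᵀMα = 0`; hence the `z⁰` coefficient of the commutator keeps `α` as an eigenvector.
-/

theorem LaurentSeries.coeff_mul_eq_sum_Icc {R : Type*} [Semiring R] {f g : LaurentSeries R}
    {a b : ℤ} (hf : ∀ p < a, f.coeff p = 0) (hg : ∀ q < b, g.coeff q = 0) (k : ℤ) :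
    (f * g).coeff k = ∑ p ∈ Finset.Icc a (k - b), f.coeff p * g.coeff (k - p) := by
  rw [HahnSeries.coeff_mul]
  symm
  refine Finset.sum_bij_ne_zero (fun p _ _ => (p, k - p)) (fun p _ hp => ?_)
    (fun _ _ _ _ _ _ h => congrArg Prod.fst h) (fun ⟨p, q⟩ hpq hpq0 => ?_) (fun _ _ _ => rfl)
  · exact Finset.mem_antidiagonal.mpr
      ⟨left_ne_zero_of_mul hp, right_ne_zero_of_mul hp, add_sub_cancel p k⟩
  · obtain ⟨hp, hq, rfl⟩ := Finset.mem_antidiagonal.mp hpq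
    have hap : a ≤ p := not_lt.mp fun h => hp (hf p h)
    have hbq : b ≤ q := not_lt.mp fun h => hq (hg q h)
    exact ⟨p, Finset.mem_Icc.mpr ⟨hap, by omega⟩, by simpa using hpq0, by simp⟩

namespace Matrix

section Wedge

variable {m R : Type*} [CommRing R]

def wedge (a b : m → R) : Matrix m m R :=
  vecMulVec a b - vecMulVec b a

theorem wedge_sub_right (a b c : m → R) : wedge a (b - c) = wedge a b - wedge a c := by
  simp only [wedge, vecMulVec_sub, sub_vecMulVec]
  abel

variable [Fintype m]

theorem wedge_mulVec (a b v : m → R) : wedge a b *ᵥ v = (b ⬝ᵥ v) • a - (a ⬝ᵥ v) • b := by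
  simp only [wedge, sub_mulVec, vecMulVec_mulVec, op_smul_eq_smul]

theorem wedge_mulVec_of_dotProduct_eq_zero {a v : m → R} (b : m → R) (hav : a ⬝ᵥ v = 0) :
    wedge a b *ᵥ v = (b ⬝ᵥ v) • a := by
  rw [wedge_mulVec, hav, zero_smul, sub_zero]

theorem wedge_mul_wedge {a b c : m → R} (ha : a ⬝ᵥ a = 0) (hb : b ⬝ᵥ a = 0) (hc : a ⬝ᵥ c = 0) :
    wedge a b * wedge a c = -((b ⬝ᵥ c) • vecMulVec a a) := by
  simp only [wedge, sub_mul, mul_sub, vecMulVec_mul_vecMulVec, ha, hb, hc, zero_smul,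
    vecMulVec_zero, vecMulVec_smul]
  abel

theorem commute_wedge_wedge {a b c : m → R} (ha : a ⬝ᵥ a = 0) (hb : b ⬝ᵥ a = 0)
    (hc : c ⬝ᵥ a = 0) : Commute (wedge a b) (wedge a c) := by
  rw [Commute, SemiconjBy, wedge_mul_wedge ha hb (dotProduct_comm c a ▸ hc),
    wedge_mul_wedge ha hc (dotProduct_comm b a ▸ hb), dotProduct_comm]

theorem mul_wedge_sub_wedge_mul {B : Matrix m m R} {a : m → R} {κ : R} (hB : Bᵀ = -B)
    (hBa : B *ᵥ a = κ • a) (b : m → R) :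
    B * wedge a b - wedge a b * B = wedge a (B *ᵥ b + κ • b) := by
  have hvecMul (v : m → R) : v ᵥ* B = -(B *ᵥ v) := by
    rw [← mulVec_transpose, hB, neg_mulVec]
  simp only [wedge, mul_sub, sub_mul, mul_vecMulVec, vecMulVec_mul, hvecMul, hBa, vecMulVec_add,
    add_vecMulVec, vecMulVec_neg, vecMulVec_smul, smul_vecMulVec]
  abel

theorem mulVec_add_smul_dotProduct_eq_zero {B : Matrix m m R} {a : m → R} {κ : R}
    (hB : Bᵀ = -B) (hBa : B *ᵥ a = κ • a) (b : m → R) : (B *ᵥ b + κ • b) ⬝ᵥ a = 0 := by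
  rw [add_dotProduct, dotProduct_comm, dotProduct_mulVec, ← mulVec_transpose, hB, neg_mulVec, hBa,
    neg_dotProduct, smul_dotProduct, smul_dotProduct, dotProduct_comm, neg_add_cancel]

theorem dotProduct_mulVec_self_eq_zero [NoZeroDivisors R] [CharZero R] {M : Matrix m m R}
    (hM : Mᵀ = -M) (a : m → R) : a ⬝ᵥ (M *ᵥ a) = 0 := by
  rw [← CharZero.eq_neg_self_iff]
  conv_lhs => rw [dotProduct_mulVec, ← mulVec_transpose, hM, neg_mulVec, neg_dotProduct,
    dotProduct_comm]

end Wedge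

theorem transpose_commutator_eq_neg {m R : Type*} [Fintype m] [CommRing R] {A B : Matrix m m R}
    (hA : Aᵀ = -A) (hB : Bᵀ = -B) : (A * B - B * A)ᵀ = -(A * B - B * A) := by
  rw [transpose_sub, transpose_mul, transpose_mul, hA, hB, neg_mul_neg, neg_mul_neg, neg_sub]

end Matrix

section LaurentMatrix

variable {n : ℕ}

theorem coeffM_sub (A B : Matrix (Fin n) (Fin n) (LaurentSeries ℂ)) (k : ℤ) :
    coeffM (A - B) k = coeffM A k - coeffM B k := by
  ext i j
  exact HahnSeries.coeff_sub

theorem transpose_eq_neg_iff_coeffM {A : Matrix (Fin n) (Fin n) (LaurentSeries ℂ)} :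
    Aᵀ = -A ↔ ∀ k, (coeffM A k)ᵀ = -coeffM A k := by
  constructor
  · rintro h k
    ext i j
    exact congrArg (HahnSeries.coeff · k) (congrFun (congrFun h i) j)
  · intro h
    ext i j k
    exact congrFun (congrFun (h k) i) j

theorem coeffM_mul_eq_sum_Icc {A B : Matrix (Fin n) (Fin n) (LaurentSeries ℂ)} {a b : ℤ}
    (hA : ordGE A a) (hB : ordGE B b) (k : ℤ) :
    coeffM (A * B) k = ∑ p ∈ Finset.Icc a (k - b), coeffM A p * coeffM B (k - p) := by
  ext i j
  simp only [coeffM, mul_apply, HahnSeries.coeff_sum, Matrix.sum_apply]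
  rw [Finset.sum_comm]
  refine Finset.sum_congr rfl fun l _ => LaurentSeries.coeff_mul_eq_sum_Icc
    (fun p hp => congrFun (congrFun (hA p hp) i) l) (fun q hq => congrFun (congrFun (hB q hq) l) j) k

theorem ordGE_mul {A B : Matrix (Fin n) (Fin n) (LaurentSeries ℂ)} {a b : ℤ}
    (hA : ordGE A a) (hB : ordGE B b) : ordGE (A * B) (a + b) := fun k hk => by
  rw [coeffM_mul_eq_sum_Icc hA hB, Finset.Icc_eq_empty (by omega), Finset.sum_empty]

section OrderNegOne

variable {A B : Matrix (Fin n) (Fin n) (LaurentSeries ℂ)}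

theorem coeffM_mul_neg_two (hA : ordGE A (-1)) (hB : ordGE B (-1)) :
    coeffM (A * B) (-2) = coeffM A (-1) * coeffM B (-1) := by
  rw [coeffM_mul_eq_sum_Icc hA hB, show Finset.Icc (-1 : ℤ) (-2 - -1) = {-1} by decide]
  simp

theorem coeffM_mul_neg_one (hA : ordGE A (-1)) (hB : ordGE B (-1)) :
    coeffM (A * B) (-1) = coeffM A (-1) * coeffM B 0 + coeffM A 0 * coeffM B (-1) := by
  rw [coeffM_mul_eq_sum_Icc hA hB, show Finset.Icc (-1 : ℤ) (-1 - -1) = {-1, 0} by decide]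
  simp

theorem coeffM_mul_zero (hA : ordGE A (-1)) (hB : ordGE B (-1)) :
    coeffM (A * B) 0 =
      coeffM A (-1) * coeffM B 1 + coeffM A 0 * coeffM B 0 + coeffM A 1 * coeffM B (-1) := by
  rw [coeffM_mul_eq_sum_Icc hA hB, show Finset.Icc (-1 : ℤ) (0 - -1) = {-1, 0, 1} by decide]
  simp [add_assoc]

end OrderNegOne

end LaurentMatrix

structure IsSoLaxOperator {n : ℕ} (α β : Fin n → ℂ) (κ : ℂ)
    (L : Matrix (Fin n) (Fin n) (LaurentSeries ℂ)) : Prop where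
  ordGE_neg_one : ordGE L (-1)
  transpose_coeffM : ∀ k, (coeffM L k)ᵀ = -coeffM L k
  coeffM_neg_one : coeffM L (-1) = wedge α β
  dotProduct_eq_zero : β ⬝ᵥ α = 0
  coeffM_zero_mulVec : coeffM L 0 *ᵥ α = κ • α

namespace IsSoLaxOperator

variable {n : ℕ} {α β β' : Fin n → ℂ} {κ κ' : ℂ} {L L' : Matrix (Fin n) (Fin n) (LaurentSeries ℂ)}

theorem coeffM_neg_one_mulVec_eq_zero (hαα : α ⬝ᵥ α = 0) (hL : IsSoLaxOperator α β κ L) :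
    coeffM L (-1) *ᵥ α = 0 := by
  rw [hL.coeffM_neg_one, wedge_mulVec_of_dotProduct_eq_zero β hαα, hL.dotProduct_eq_zero,
    zero_smul]

theorem ordGE_commutator (hαα : α ⬝ᵥ α = 0) (hL : IsSoLaxOperator α β κ L)
    (hL' : IsSoLaxOperator α β' κ' L') : ordGE (L * L' - L' * L) (-1) := by
  intro k hk
  rcases (show k < -2 ∨ k = -2 by omega) with hk | rfl
  · rw [coeffM_sub, ordGE_mul hL.ordGE_neg_one hL'.ordGE_neg_one k hk,
      ordGE_mul hL'.ordGE_neg_one hL.ordGE_neg_one k hk, sub_zero]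
  · rw [coeffM_sub, coeffM_mul_neg_two hL.ordGE_neg_one hL'.ordGE_neg_one,
      coeffM_mul_neg_two hL'.ordGE_neg_one hL.ordGE_neg_one, hL.coeffM_neg_one,
      hL'.coeffM_neg_one, (commute_wedge_wedge hαα hL.dotProduct_eq_zero hL'.dotProduct_eq_zero).eq,
      sub_self]

theorem transpose_coeffM_commutator (hL : IsSoLaxOperator α β κ L)
    (hL' : IsSoLaxOperator α β' κ' L') (k : ℤ) :
    (coeffM (L * L' - L' * L) k)ᵀ = -coeffM (L * L' - L' * L) k :=
  transpose_eq_neg_iff_coeffM.mp (transpose_commutator_eq_neg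
    (transpose_eq_neg_iff_coeffM.mpr hL.transpose_coeffM)
    (transpose_eq_neg_iff_coeffM.mpr hL'.transpose_coeffM)) k

theorem coeffM_commutator_neg_one (hL : IsSoLaxOperator α β κ L)
    (hL' : IsSoLaxOperator α β' κ' L') :
    coeffM (L * L' - L' * L) (-1) =
      wedge α (coeffM L 0 *ᵥ β' + κ • β' - (coeffM L' 0 *ᵥ β + κ' • β)) := by
  rw [coeffM_sub, coeffM_mul_neg_one hL.ordGE_neg_one hL'.ordGE_neg_one,
    coeffM_mul_neg_one hL'.ordGE_neg_one hL.ordGE_neg_one, hL.coeffM_neg_one, hL'.coeffM_neg_one,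
    wedge_sub_right, ← mul_wedge_sub_wedge_mul (hL.transpose_coeffM 0) hL.coeffM_zero_mulVec,
    ← mul_wedge_sub_wedge_mul (hL'.transpose_coeffM 0) hL'.coeffM_zero_mulVec]
  abel

theorem coeffM_commutator_zero_mulVec (hαα : α ⬝ᵥ α = 0) (hL : IsSoLaxOperator α β κ L)
    (hL' : IsSoLaxOperator α β' κ' L') :
    coeffM (L * L' - L' * L) 0 *ᵥ α =
      (β ⬝ᵥ (coeffM L' 1 *ᵥ α) - β' ⬝ᵥ (coeffM L 1 *ᵥ α)) • α := by
  have hres {γ : Fin n → ℂ} (M : Matrix (Fin n) (Fin n) ℂ) (hM : Mᵀ = -M) :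
      wedge α γ *ᵥ (M *ᵥ α) = (γ ⬝ᵥ (M *ᵥ α)) • α :=
    wedge_mulVec_of_dotProduct_eq_zero γ (dotProduct_mulVec_self_eq_zero hM α)
  simp only [coeffM_sub, coeffM_mul_zero hL.ordGE_neg_one hL'.ordGE_neg_one,
    coeffM_mul_zero hL'.ordGE_neg_one hL.ordGE_neg_one, sub_mulVec, add_mulVec, ← mulVec_mulVec,
    hL.coeffM_neg_one_mulVec_eq_zero hαα, hL'.coeffM_neg_one_mulVec_eq_zero hαα, mulVec_zero, hL.coeffM_zero_mulVec,
    hL'.coeffM_zero_mulVec, mulVec_smul]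
  rw [hL.coeffM_neg_one, hL'.coeffM_neg_one, hres _ (hL.transpose_coeffM 1),
    hres _ (hL'.transpose_coeffM 1)]
  module

theorem commutator (hαα : α ⬝ᵥ α = 0) (hL : IsSoLaxOperator α β κ L)
    (hL' : IsSoLaxOperator α β' κ' L') :
    IsSoLaxOperator α (coeffM L 0 *ᵥ β' + κ • β' - (coeffM L' 0 *ᵥ β + κ' • β))
      (β ⬝ᵥ (coeffM L' 1 *ᵥ α) - β' ⬝ᵥ (coeffM L 1 *ᵥ α)) (L * L' - L' * L) where
  ordGE_neg_one := hL.ordGE_commutator hαα hL'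
  transpose_coeffM := hL.transpose_coeffM_commutator hL'
  coeffM_neg_one := hL.coeffM_commutator_neg_one hL'
  dotProduct_eq_zero := by
    rw [sub_dotProduct, mulVec_add_smul_dotProduct_eq_zero (hL.transpose_coeffM 0)
      hL.coeffM_zero_mulVec, mulVec_add_smul_dotProduct_eq_zero (hL'.transpose_coeffM 0)
      hL'.coeffM_zero_mulVec, sub_zero]
  coeffM_zero_mulVec := hL.coeffM_commutator_zero_mulVec hαα hL'

end IsSoLaxOperator

theorem lax_so_commutator_closed_general (n : ℕ)
    (α : Fin n → ℂ) (hαα : α ⬝ᵥ α = 0)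
    (β β' : Fin n → ℂ) (hβα : β ⬝ᵥ α = 0) (hβ'α : β' ⬝ᵥ α = 0) (κ κ' : ℂ)
    (L L' : Matrix (Fin n) (Fin n) (LaurentSeries ℂ))
    (hLord : ordGE L (-1)) (hL'ord : ordGE L' (-1))
    (hLskew : ∀ k : ℤ, (coeffM L k)ᵀ = -coeffM L k)
    (hL'skew : ∀ k : ℤ, (coeffM L' k)ᵀ = -coeffM L' k)
    (hLm1 : coeffM L (-1) = vecMulVec α β - vecMulVec β α)
    (hL'm1 : coeffM L' (-1) = vecMulVec α β' - vecMulVec β' α)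
    (hL0 : (coeffM L 0).mulVec α = κ • α)
    (hL'0 : (coeffM L' 0).mulVec α = κ' • α) :
    ordGE (L * L' - L' * L) (-1) ∧
    (∀ k : ℤ, (coeffM (L * L' - L' * L) k)ᵀ = -coeffM (L * L' - L' * L) k) ∧
    ∃ (β'' : Fin n → ℂ) (κ'' : ℂ),
      coeffM (L * L' - L' * L) (-1) = vecMulVec α β'' - vecMulVec β'' α ∧
      β'' ⬝ᵥ α = 0 ∧
      (coeffM (L * L' - L' * L) 0).mulVec α = κ'' • α := by
  have hC := IsSoLaxOperator.commutator hαα ⟨hLord, hLskew, hLm1, hβα, hL0⟩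
    ⟨hL'ord, hL'skew, hL'm1, hβ'α, hL'0⟩
  exact ⟨hC.ordGE_neg_one, hC.transpose_coeffM, _, _, hC.coeffM_neg_one, hC.dotProduct_eq_zero,
    hC.coeffM_zero_mulVec⟩

/-- The `so(n)` case of closedness of the space of Lax operators under the pointwise
commutator, localized at a Tyurin point. -/
theorem lax_so_commutator_closed (n : ℕ) (hn : 1 ≤ n)
    (α : Fin n → ℂ) (hαα : α ⬝ᵥ α = 0)
    (β β' : Fin n → ℂ) (hβα : β ⬝ᵥ α = 0) (hβ'α : β' ⬝ᵥ α = 0) (κ κ' : ℂ)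
    (L L' : Matrix (Fin n) (Fin n) (LaurentSeries ℂ))
    (hLord : ordGE L (-1)) (hL'ord : ordGE L' (-1))
    (hLskew : ∀ k : ℤ, (coeffM L k)ᵀ = -coeffM L k)
    (hL'skew : ∀ k : ℤ, (coeffM L' k)ᵀ = -coeffM L' k)
    (hLm1 : coeffM L (-1) = vecMulVec α β - vecMulVec β α)
    (hL'm1 : coeffM L' (-1) = vecMulVec α β' - vecMulVec β' α)
    (hL0 : (coeffM L 0).mulVec α = κ • α)
    (hL'0 : (coeffM L' 0).mulVec α = κ' • α) :
    ordGE (L * L' - L' * L) (-1) ∧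
    (∀ k : ℤ, (coeffM (L * L' - L' * L) k)ᵀ = -coeffM (L * L' - L' * L) k) ∧
    ∃ (β'' : Fin n → ℂ) (κ'' : ℂ),
      coeffM (L * L' - L' * L) (-1) = vecMulVec α β'' - vecMulVec β'' α ∧
      β'' ⬝ᵥ α = 0 ∧
      (coeffM (L * L' - L' * L) 0).mulVec α = κ'' • α :=
  lax_so_commutator_closed_general n α hαα β β' hβα hβ'α κ κ' L L' hLord hL'ord hLskew hL'skew hLm1
    hL'm1 hL0 hL'0
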